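/- arXiv:1910.10906 — 4 statements merged into one kernel-verified Lean document; each statement's English description precedes it below -/
import Mathlib

section
/- Let X ⊆ R^n be compact convex, d : X → R differentiable and 1-strongly convex w.r.t. a norm ‖·‖, and η > 0. Given losses ℓ^1,…,ℓ^T, define the omniscient FTRL iterates x_o^t := argmin_{x ∈ X} ⟨Σ_{τ≤t} ℓ^τ, x⟩ + (1/η) d(x) for t ≥ 0 (with the empty sum for t = 0). Then for every x̂ ∈ X, Σ_{t=1}^T ⟨ℓ^t, x_o^t − x̂⟩ ≤ (1/η)(d(x̂) − d(x_o^0)) − (1/(2η)) Σ_{t=1}^T ‖x_o^t − x_o^{t−1}‖². -/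
open RealInnerProductSpace Finset

/-!
With `F_t x = ⟪L_t, x⟫ + d x / η`, the first-order optimality condition of `x_o^t` on the convex
set `X` combined with the strong convexity inequality of `d` at `x_o^t` gives quadratic growth:
`F_t z ≥ F_t (x_o^t) + ‖z - x_o^t‖² / (2η)` for `z ∈ X`. Taking `z = x_o^{t+1}` and using
`F_{t+1} = F_t + ⟪ℓ^{t+1}, ·⟫`, these inequalities telescope; minimality of `x_o^T` against `x̂`
then closes the bound.
-/

theorem IsMinOn.fderiv_sub_nonneg_of_convex {E : Type*} [NormedAddCommGroup E] [NormedSpace ℝ E]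
    {s : Set E} (hs : Convex ℝ s) {f : E → ℝ} {f' : E →L[ℝ] ℝ} {x z : E}
    (hmin : IsMinOn f s x) (hf : HasFDerivAt f f' x) (hx : x ∈ s) (hz : z ∈ s) :
    0 ≤ f' (z - x) :=
  hmin.localize.hasFDerivWithinAt_nonneg hf.hasFDerivWithinAt
    (sub_mem_posTangentConeAt_of_segment_subset (hs.segment_subset hx hz))

section
variable {E : Type*} [NormedAddCommGroup E] [InnerProductSpace ℝ E]

theorem IsMinOn.add_div_le_of_strongConvex [CompleteSpace E] {s : Set E} (hs : Convex ℝ s)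
    {d : E → ℝ} {g L x z : E} {η r : ℝ} (hη : 0 < η) (hd : HasGradientAt d g x)
    (hsc : d x + ⟪g, z - x⟫ + r ≤ d z)
    (hmin : IsMinOn (fun y ↦ ⟪L, y⟫ + 1 / η * d y) s x) (hx : x ∈ s) (hz : z ∈ s) :
    ⟪L, x⟫ + 1 / η * d x + r / η ≤ ⟪L, z⟫ + 1 / η * d z := by
  have hf := ((innerSL ℝ L).hasFDerivAt (x := x)).add (hd.hasFDerivAt.const_mul (1 / η))
  have hopt := hmin.fderiv_sub_nonneg_of_convex hs hf hx hz
  simp only [add_apply, innerSL_apply_apply, smul_apply,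
    InnerProductSpace.toDual_apply_apply, smul_eq_mul, inner_sub_right] at hopt
  have h := mul_le_mul_of_nonneg_left hsc (one_div_nonneg.2 hη.le)
  rw [inner_sub_right] at h
  rw [div_eq_mul_one_div r η]
  linarith

theorem sum_inner_add_sum_le_of_forall_step (ℓ x : ℕ → E) (R : E → ℝ) (c : ℕ → ℝ)
    (hstep : ∀ t, ⟪∑ τ ∈ Icc 1 t, ℓ τ, x t⟫ + R (x t) + c (t + 1)
      ≤ ⟪∑ τ ∈ Icc 1 t, ℓ τ, x (t + 1)⟫ + R (x (t + 1))) (T : ℕ) :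
    ∑ t ∈ Icc 1 T, ⟪ℓ t, x t⟫ + ∑ t ∈ Icc 1 T, c t
      ≤ ⟪∑ τ ∈ Icc 1 T, ℓ τ, x T⟫ + R (x T) - R (x 0) := by
  induction T with
  | zero => simp
  | succ k ih =>
    simp only [sum_Icc_succ_top (Nat.le_add_left 1 k), inner_add_left]
    linarith [hstep k]

end

theorem stmt5_general {n : ℕ} (X : Set (EuclideanSpace ℝ (Fin n)))
    (hXconv : Convex ℝ X)
    (nrm : EuclideanSpace ℝ (Fin n) → ℝ)
    (d : EuclideanSpace ℝ (Fin n) → ℝ)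
    (gd : EuclideanSpace ℝ (Fin n) → EuclideanSpace ℝ (Fin n))
    (hdiff : ∀ x ∈ X, HasGradientAt d (gd x) x)
    (hsc : ∀ x ∈ X, ∀ y ∈ X,
      d y ≥ d x + ⟪gd x, y - x⟫ + (1 / 2) * (nrm (y - x)) ^ 2)
    (η : ℝ) (hη : 0 < η)
    (T : ℕ) (ℓ : ℕ → EuclideanSpace ℝ (Fin n))
    (xo : ℕ → EuclideanSpace ℝ (Fin n))
    -- `xo t = argmin_{x ∈ X} ⟨Σ_{τ ≤ t} ℓ^τ, x⟩ + (1/η) d(x)` (empty sum for `t = 0`)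
    (hxo : ∀ t, xo t ∈ X ∧ ∀ z ∈ X,
      ⟪∑ τ ∈ Icc 1 t, ℓ τ, xo t⟫ + (1 / η) * d (xo t)
        ≤ ⟪∑ τ ∈ Icc 1 t, ℓ τ, z⟫ + (1 / η) * d z) :
    ∀ xhat ∈ X,
      ∑ t ∈ Icc 1 T, ⟪ℓ t, xo t - xhat⟫
        ≤ (1 / η) * (d xhat - d (xo 0))
          - (1 / (2 * η)) * ∑ t ∈ Icc 1 T, (nrm (xo t - xo (t - 1))) ^ 2 := by
  intro xhat hxhat
  have hmin : ∀ t, IsMinOn (fun y ↦ ⟪∑ τ ∈ Icc 1 t, ℓ τ, y⟫ + 1 / η * d y) X (xo t) :=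
    fun t z hz ↦ (hxo t).2 z hz
  have hstep : ∀ t, ⟪∑ τ ∈ Icc 1 t, ℓ τ, xo t⟫ + 1 / η * d (xo t)
      + 1 / (2 * η) * nrm (xo (t + 1) - xo (t + 1 - 1)) ^ 2
      ≤ ⟪∑ τ ∈ Icc 1 t, ℓ τ, xo (t + 1)⟫ + 1 / η * d (xo (t + 1)) := fun t ↦ by
    have := (hmin t).add_div_le_of_strongConvex hXconv hη (hdiff _ (hxo t).1)
      (hsc _ (hxo t).1 _ (hxo (t + 1)).1) (hxo t).1 (hxo (t + 1)).1
    rw [Nat.add_sub_cancel]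
    convert this using 2
    ring
  have hregret := sum_inner_add_sum_le_of_forall_step ℓ xo (fun y ↦ 1 / η * d y)
    (fun t ↦ 1 / (2 * η) * nrm (xo t - xo (t - 1)) ^ 2) hstep T
  have hsplit : ∑ t ∈ Icc 1 T, ⟪ℓ t, xo t - xhat⟫
      = ∑ t ∈ Icc 1 T, ⟪ℓ t, xo t⟫ - ⟪∑ τ ∈ Icc 1 T, ℓ τ, xhat⟫ := by
    simp only [inner_sub_right, sum_sub_distrib, sum_inner]
  rw [hsplit, mul_sum]
  linarith [(hxo T).2 xhat hxhat]

/-- regret bound for omniscient ("be-the-leader") FTRL: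
`Σ_{t=1}^T ⟨ℓ^t, x_o^t − x̂⟩ ≤ (1/η)(d(x̂) − d(x_o^0)) − (1/(2η)) Σ_t ‖x_o^t − x_o^{t−1}‖²`. -/
theorem stmt5 {n : ℕ} (X : Set (EuclideanSpace ℝ (Fin n)))
    (hXc : IsCompact X) (hXconv : Convex ℝ X)
    (nrm : EuclideanSpace ℝ (Fin n) → ℝ)
    (hn0 : ∀ v, 0 ≤ nrm v)
    (hndef : ∀ v, nrm v = 0 → v = 0)
    (hnsmul : ∀ (c : ℝ) v, nrm (c • v) = |c| * nrm v)
    (hntri : ∀ v w, nrm (v + w) ≤ nrm v + nrm w)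
    (d : EuclideanSpace ℝ (Fin n) → ℝ)
    (gd : EuclideanSpace ℝ (Fin n) → EuclideanSpace ℝ (Fin n))
    (hdiff : ∀ x ∈ X, HasGradientAt d (gd x) x)
    (hsc : ∀ x ∈ X, ∀ y ∈ X,
      d y ≥ d x + ⟪gd x, y - x⟫ + (1 / 2) * (nrm (y - x)) ^ 2)
    (η : ℝ) (hη : 0 < η)
    (T : ℕ) (ℓ : ℕ → EuclideanSpace ℝ (Fin n))
    (xo : ℕ → EuclideanSpace ℝ (Fin n))
    -- `xo t = argmin_{x ∈ X} ⟨Σ_{τ ≤ t} ℓ^τ, x⟩ + (1/η) d(x)` (empty sum for `t = 0`)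
    (hxo : ∀ t, xo t ∈ X ∧ ∀ z ∈ X,
      ⟪∑ τ ∈ Icc 1 t, ℓ τ, xo t⟫ + (1 / η) * d (xo t)
        ≤ ⟪∑ τ ∈ Icc 1 t, ℓ τ, z⟫ + (1 / η) * d z) :
    ∀ xhat ∈ X,
      ∑ t ∈ Icc 1 T, ⟪ℓ t, xo t - xhat⟫
        ≤ (1 / η) * (d xhat - d (xo 0))
          - (1 / (2 * η)) * ∑ t ∈ Icc 1 T, (nrm (xo t - xo (t - 1))) ^ 2 :=
  stmt5_general X hXconv nrm d gd hdiff hsc η hη T ℓ xo hxo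
end

section
/- Let X ⊆ R^n be compact convex, d : X → R differentiable and 1-strongly convex w.r.t. a norm ‖·‖, η > 0. Given losses ℓ^1,…,ℓ^T and predictions m^1,…,m^T, define L^t := Σ_{τ≤t} ℓ^τ, the OFTRL iterates x^t := argmin_{x∈X} ⟨L^{t−1} + m^t, x⟩ + (1/η)d(x), and the omniscient iterates x_o^t := argmin_{x∈X} ⟨L^t, x⟩ + (1/η)d(x). Then Σ_{t=1}^T ⟨m^t, x^t − x_o^t⟩ ≤ −R_o^T + Δ_d/η − (1/(4η)) Σ_{t=1}^{T−1} ‖x^{t+1} − x^t‖², where R_o^T := max_{x̂∈X} Σ_{t=1}^T ⟨ℓ^t, x_o^t − x̂⟩ and Δ_d := max_{x,y∈X} (d(x) − d(y)). -/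
open RealInnerProductSpace Finset

lemma qg_lemma {n : ℕ} (X : Set (EuclideanSpace ℝ (Fin n))) (hXconv : Convex ℝ X)
    (nrm : EuclideanSpace ℝ (Fin n) → ℝ)
    (hnsmul : ∀ (c : ℝ) v, nrm (c • v) = |c| * nrm v)
    (d : EuclideanSpace ℝ (Fin n) → ℝ)
    (gd : EuclideanSpace ℝ (Fin n) → EuclideanSpace ℝ (Fin n))
    (hsc : ∀ x ∈ X, ∀ y ∈ X,
      d y ≥ d x + ⟪gd x, y - x⟫ + (1 / 2) * (nrm (y - x)) ^ 2)
    (η : ℝ) (hη : 0 < η)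
    (L xs : EuclideanSpace ℝ (Fin n)) (hxs : xs ∈ X)
    (hmin : ∀ z ∈ X, ⟪L, xs⟫ + (1 / η) * d xs ≤ ⟪L, z⟫ + (1 / η) * d z)
    (z : EuclideanSpace ℝ (Fin n)) (hz : z ∈ X) :
    ⟪L, xs⟫ + (1 / η) * d xs + (1 / (2 * η)) * (nrm (z - xs)) ^ 2
      ≤ ⟪L, z⟫ + (1 / η) * d z := by
  have hs2 : 0 ≤ (nrm (z - xs)) ^ 2 := sq_nonneg _
  obtain ⟨D, hD⟩ : ∃ D : ℝ, D = (⟪L, z⟫ + (1 / η) * d z) - (⟪L, xs⟫ + (1 / η) * d xs) :=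
    ⟨_, rfl⟩
  have key : ∀ lam : ℝ, 0 < lam → lam < 1 →
      (1 / (2 * η)) * (1 - lam) * (nrm (z - xs)) ^ 2 ≤ D := by
    intro lam h0 h1
    have hwX : xs + lam • (z - xs) ∈ X := by
      have h : xs + lam • (z - xs) = (1 - lam) • xs + lam • z := by module
      rw [h]
      exact hXconv hxs hz (by linarith) h0.le (by ring)
    have hxsw : xs - (xs + lam • (z - xs)) = (-lam) • (z - xs) := by module
    have hzw : z - (xs + lam • (z - xs)) = (1 - lam) • (z - xs) := by module
    have e1 := hsc _ hwX xs hxs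
    have e2 := hsc _ hwX z hz
    rw [hxsw, hnsmul, inner_smul_right, abs_neg, abs_of_pos h0] at e1
    rw [hzw, hnsmul, inner_smul_right, abs_of_pos (by linarith : (0:ℝ) < 1 - lam)] at e2
    have p1 := mul_le_mul_of_nonneg_left e1 (by linarith : (0:ℝ) ≤ 1 - lam)
    have p2 := mul_le_mul_of_nonneg_left e2 h0.le
    have h1' : d (xs + lam • (z - xs)) ≤ (1 - lam) * d xs + lam * d z
        - (1/2) * lam * (1 - lam) * (nrm (z - xs))^2 := by nlinarith [p1, p2]
    have hm := hmin _ hwX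
    have hLw : ⟪L, xs + lam • (z - xs)⟫ = ⟪L, xs⟫ + lam * (⟪L, z⟫ - ⟪L, xs⟫) := by
      simp only [inner_add_right, inner_smul_right, inner_sub_right]
    rw [hLw] at hm
    have h1'' := mul_le_mul_of_nonneg_left h1' (by positivity : (0:ℝ) ≤ 1/η)
    have hcancel : lam * ((1 / (2 * η)) * (1 - lam) * (nrm (z - xs)) ^ 2) ≤ lam * D := by
      rw [hD]
      have hinv : (1 : ℝ) / (2 * η) = (1/η) * (1/2) := by field_simp
      rw [hinv]
      nlinarith [hm, h1'']
    exact le_of_mul_le_mul_left hcancel h0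
  obtain ⟨c, hcc⟩ : ∃ c : ℝ, c = (1 / (2 * η)) * (nrm (z - xs)) ^ 2 := ⟨_, rfl⟩
  have hc0 : 0 ≤ c := by rw [hcc]; positivity
  have hkey' : ∀ lam : ℝ, 0 < lam → lam < 1 → c * (1 - lam) ≤ D := by
    intro lam h0 h1
    have := key lam h0 h1
    calc c * (1 - lam) = (1 / (2 * η)) * (1 - lam) * (nrm (z - xs)) ^ 2 := by rw [hcc]; ring
      _ ≤ D := this
  have hDhalf : c * (1 - 1/2) ≤ D := hkey' (1/2) (by norm_num) (by norm_num)
  have hD0 : 0 ≤ D := by linarith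
  have hcD : c ≤ D := by
    by_contra h
    push_neg at h
    have hcpos : 0 < c := lt_of_le_of_lt hD0 h
    have hl0 : 0 < (c - D) / c := div_pos (by linarith) hcpos
    have hl1 : (c - D) / c ≤ 1 := by rw [div_le_one hcpos]; linarith
    have hk := hkey' ((c - D) / c / 2) (by linarith) (by linarith)
    have heq : c * (1 - (c - D) / c / 2) = (c + D) / 2 := by
      field_simp
      ring
    rw [heq] at hk
    linarith
  rw [hcc] at hcD
  rw [hD] at hcD
  linarith

/-- the key technical lemma for OFTRL:
`Σ_{t=1}^T ⟨m^t, x^t − x_o^t⟩ ≤ −R_o^T + Δ_d/η − (1/(4η)) Σ_{t=1}^{T−1} ‖x^{t+1} − x^t‖²`. -/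
theorem stmt6 {n : ℕ} (X : Set (EuclideanSpace ℝ (Fin n)))
    (hXc : IsCompact X) (hXconv : Convex ℝ X)
    (nrm : EuclideanSpace ℝ (Fin n) → ℝ)
    (hn0 : ∀ v, 0 ≤ nrm v)
    (hndef : ∀ v, nrm v = 0 → v = 0)
    (hnsmul : ∀ (c : ℝ) v, nrm (c • v) = |c| * nrm v)
    (hntri : ∀ v w, nrm (v + w) ≤ nrm v + nrm w)
    (d : EuclideanSpace ℝ (Fin n) → ℝ)
    (gd : EuclideanSpace ℝ (Fin n) → EuclideanSpace ℝ (Fin n))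
    (hdiff : ∀ x ∈ X, HasGradientAt d (gd x) x)
    (hsc : ∀ x ∈ X, ∀ y ∈ X,
      d y ≥ d x + ⟪gd x, y - x⟫ + (1 / 2) * (nrm (y - x)) ^ 2)
    (η : ℝ) (hη : 0 < η)
    (T : ℕ) (hT : 0 < T)
    (ℓ m : ℕ → EuclideanSpace ℝ (Fin n))
    (x xo : ℕ → EuclideanSpace ℝ (Fin n))
    -- OFTRL iterates: `x t = argmin_{z ∈ X} ⟨L^{t−1} + m^t, z⟩ + (1/η) d(z)`
    (hx : ∀ t, x t ∈ X ∧ ∀ z ∈ X,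
      ⟪(∑ τ ∈ Icc 1 (t - 1), ℓ τ) + m t, x t⟫ + (1 / η) * d (x t)
        ≤ ⟪(∑ τ ∈ Icc 1 (t - 1), ℓ τ) + m t, z⟫ + (1 / η) * d z)
    -- omniscient iterates: `xo t = argmin_{z ∈ X} ⟨L^t, z⟩ + (1/η) d(z)`
    (hxo : ∀ t, xo t ∈ X ∧ ∀ z ∈ X,
      ⟪∑ τ ∈ Icc 1 t, ℓ τ, xo t⟫ + (1 / η) * d (xo t)
        ≤ ⟪∑ τ ∈ Icc 1 t, ℓ τ, z⟫ + (1 / η) * d z)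
    -- `Ro = R_o^T = max_{x̂ ∈ X} Σ_t ⟨ℓ^t, x_o^t − x̂⟩`
    (Ro : ℝ)
    (hRo : IsLUB {r : ℝ | ∃ xhat ∈ X, r = ∑ t ∈ Icc 1 T, ⟪ℓ t, xo t - xhat⟫} Ro)
    -- `Δd = max_{x, y ∈ X} (d(x) − d(y))`
    (Δd : ℝ)
    (hΔd : IsLUB {r : ℝ | ∃ a ∈ X, ∃ b ∈ X, r = d a - d b} Δd) :
    ∑ t ∈ Icc 1 T, ⟪m t, x t - xo t⟫
      ≤ -Ro + Δd / η
        - (1 / (4 * η)) * ∑ t ∈ Icc 1 (T - 1), (nrm (x (t + 1) - x t)) ^ 2 := by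
  classical
  -- Icc → range conversion
  have hIcc : ∀ (f : ℕ → ℝ) (N : ℕ), ∑ t ∈ Icc 1 N, f t = ∑ i ∈ range N, f (i + 1) := by
    intro f N
    rw [← Finset.Ico_add_one_right_eq_Icc, Finset.sum_Ico_eq_sum_range]
    exact Finset.sum_congr rfl fun i _ => by rw [add_comm]
  -- abbreviations
  set Ls : ℕ → EuclideanSpace ℝ (Fin n) := fun t => ∑ τ ∈ Icc 1 t, ℓ τ with hLs
  have hΦstep : ∀ t : ℕ,
      (⟪Ls t, xo t⟫ + (1 / η) * d (xo t))
        + (⟪m (t+1), x (t+1)⟫ + ⟪ℓ (t+1), xo (t+1)⟫ - ⟪m (t+1), xo (t+1)⟫)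
        + (1 / (2 * η)) * ((nrm (xo (t+1) - x (t+1)))^2 + (nrm (x (t+1) - xo t))^2)
      ≤ ⟪Ls (t+1), xo (t+1)⟫ + (1 / η) * d (xo (t+1)) := by
    intro t
    have hI := qg_lemma X hXconv nrm hnsmul d gd hsc η hη (Ls t) (xo t) (hxo t).1
      (hxo t).2 (x (t+1)) (hx (t+1)).1
    have hminx : ∀ z ∈ X, ⟪Ls t + m (t+1), x (t+1)⟫ + (1 / η) * d (x (t+1))
        ≤ ⟪Ls t + m (t+1), z⟫ + (1 / η) * d z := by
      intro z hz
      have := (hx (t+1)).2 z hz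
      simpa using this
    have hII := qg_lemma X hXconv nrm hnsmul d gd hsc η hη (Ls t + m (t+1)) (x (t+1))
      (hx (t+1)).1 hminx (xo (t+1)) (hxo (t+1)).1
    have hLsucc : Ls (t+1) = Ls t + ℓ (t+1) := by
      rw [hLs]
      exact Finset.sum_Icc_succ_top (Nat.succ_le_succ (Nat.zero_le _)) _
    have h1 : ⟪Ls (t+1), xo (t+1)⟫ = ⟪Ls t, xo (t+1)⟫ + ⟪ℓ (t+1), xo (t+1)⟫ := by
      rw [hLsucc, inner_add_left]
    have h2 : ⟪Ls t + m (t+1), x (t+1)⟫ = ⟪Ls t, x (t+1)⟫ + ⟪m (t+1), x (t+1)⟫ :=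
      inner_add_left _ _ _
    have h3 : ⟪Ls t + m (t+1), xo (t+1)⟫ = ⟪Ls t, xo (t+1)⟫ + ⟪m (t+1), xo (t+1)⟫ :=
      inner_add_left _ _ _
    rw [h2, h3] at hII
    rw [h1]
    linarith [hI, hII]
  -- telescoping
  have tel : ∀ N : ℕ,
      (1 / η) * d (xo 0)
        + ∑ i ∈ range N,
          ((⟪m (i+1), x (i+1)⟫ + ⟪ℓ (i+1), xo (i+1)⟫ - ⟪m (i+1), xo (i+1)⟫)
            + (1 / (2 * η)) * ((nrm (xo (i+1) - x (i+1)))^2 + (nrm (x (i+1) - xo i))^2))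
      ≤ ⟪Ls N, xo N⟫ + (1 / η) * d (xo N) := by
    intro N
    induction N with
    | zero =>
      simp only [Finset.range_zero, Finset.sum_empty, add_zero]
      have h0 : Ls 0 = 0 := by
        rw [hLs]
        simp [Finset.Icc_eq_empty_of_lt]
      rw [h0, inner_zero_left]
      linarith
    | succ k ih =>
      rw [Finset.sum_range_succ]
      have := hΦstep k
      linarith
  -- main inequality for each comparator x̂ ∈ X
  have main : ∀ xhat ∈ X,
      ∑ t ∈ Icc 1 T, ⟪m t, x t - xo t⟫ + ∑ t ∈ Icc 1 T, ⟪ℓ t, xo t - xhat⟫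
        ≤ Δd / η - (1 / (4 * η)) * ∑ t ∈ Icc 1 (T - 1), (nrm (x (t + 1) - x t)) ^ 2 := by
    intro xhat hxhat
    have hup : ⟪Ls T, xo T⟫ + (1 / η) * d (xo T) ≤ ⟪Ls T, xhat⟫ + (1 / η) * d xhat :=
      (hxo T).2 xhat hxhat
    have hΔ : d xhat - d (xo 0) ≤ Δd := hΔd.1 ⟨xhat, hxhat, xo 0, (hxo 0).1, rfl⟩
    have hΔ' : (1 / η) * (d xhat - d (xo 0)) ≤ (1 / η) * Δd :=
      mul_le_mul_of_nonneg_left hΔ (by positivity)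
    have htel := tel T
    -- split the telescoped sum
    have hsplit : ∑ i ∈ range T,
          ((⟪m (i+1), x (i+1)⟫ + ⟪ℓ (i+1), xo (i+1)⟫ - ⟪m (i+1), xo (i+1)⟫)
            + (1 / (2 * η)) * ((nrm (xo (i+1) - x (i+1)))^2 + (nrm (x (i+1) - xo i))^2))
        = (∑ i ∈ range T, (⟪m (i+1), x (i+1)⟫ + ⟪ℓ (i+1), xo (i+1)⟫ - ⟪m (i+1), xo (i+1)⟫))
          + (1 / (2 * η)) * ∑ i ∈ range T,
              ((nrm (xo (i+1) - x (i+1)))^2 + (nrm (x (i+1) - xo i))^2) := by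
      rw [Finset.sum_add_distrib, Finset.mul_sum]
    rw [hsplit] at htel
    -- lower bound on the stability sum
    have hbsum : (1/2) * ∑ i ∈ range (T-1), (nrm (x (i+1+1) - x (i+1)))^2
        ≤ ∑ i ∈ range T, ((nrm (xo (i+1) - x (i+1)))^2 + (nrm (x (i+1) - xo i))^2) := by
      have hT1 : T = (T-1) + 1 := by omega
      have hsplit2 : ∑ i ∈ range T, ((nrm (xo (i+1) - x (i+1)))^2 + (nrm (x (i+1) - xo i))^2)
          = (∑ i ∈ range T, (nrm (xo (i+1) - x (i+1)))^2)
            + ∑ i ∈ range T, (nrm (x (i+1) - xo i))^2 := Finset.sum_add_distrib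
      have hp : ∑ i ∈ range (T-1), (nrm (xo (i+1) - x (i+1)))^2
          ≤ ∑ i ∈ range T, (nrm (xo (i+1) - x (i+1)))^2 :=
        Finset.sum_le_sum_of_subset_of_nonneg
          (Finset.range_subset_range.mpr (by omega)) (fun i _ _ => sq_nonneg _)
      have hq : ∑ i ∈ range (T-1), (nrm (x (i+1+1) - xo (i+1)))^2
          ≤ ∑ i ∈ range T, (nrm (x (i+1) - xo i))^2 := by
        conv_rhs => rw [hT1]
        rw [Finset.sum_range_succ']
        have : (0:ℝ) ≤ (nrm (x (0+1) - xo 0))^2 := sq_nonneg _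
        linarith
      have hpt : ∀ i ∈ range (T-1), (1/2) * (nrm (x (i+1+1) - x (i+1)))^2
          ≤ (nrm (xo (i+1) - x (i+1)))^2 + (nrm (x (i+1+1) - xo (i+1)))^2 := by
        intro i _
        have htr : nrm (x (i+1+1) - x (i+1))
            ≤ nrm (x (i+1+1) - xo (i+1)) + nrm (xo (i+1) - x (i+1)) := by
          have h := hntri (x (i+1+1) - xo (i+1)) (xo (i+1) - x (i+1))
          have he : x (i+1+1) - xo (i+1) + (xo (i+1) - x (i+1)) = x (i+1+1) - x (i+1) := by
            module
          rwa [he] at h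
        have hmul := mul_self_le_mul_self (hn0 (x (i+1+1) - x (i+1))) htr
        nlinarith [hmul, sq_nonneg (nrm (x (i+1+1) - xo (i+1)) - nrm (xo (i+1) - x (i+1)))]
      have hptsum : ∑ i ∈ range (T-1), (1/2) * (nrm (x (i+1+1) - x (i+1)))^2
          ≤ ∑ i ∈ range (T-1),
            ((nrm (xo (i+1) - x (i+1)))^2 + (nrm (x (i+1+1) - xo (i+1)))^2) :=
        Finset.sum_le_sum hpt
      rw [Finset.sum_add_distrib] at hptsum
      rw [← Finset.mul_sum]  at hptsum
      rw [hsplit2]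
      linarith
    have hbsum' : (1 / (2 * η)) * ((1/2) * ∑ i ∈ range (T-1), (nrm (x (i+1+1) - x (i+1)))^2)
        ≤ (1 / (2 * η)) * ∑ i ∈ range T,
            ((nrm (xo (i+1) - x (i+1)))^2 + (nrm (x (i+1) - xo i))^2) :=
      mul_le_mul_of_nonneg_left hbsum (by positivity)
    -- rewrite the goal sums over ranges
    rw [hIcc (fun t => ⟪m t, x t - xo t⟫) T, hIcc (fun t => ⟪ℓ t, xo t - xhat⟫) T,
      hIcc (fun t => (nrm (x (t + 1) - x t))^2) (T-1)]
    -- relate the a-sum with the goal sums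
    have hLhat : ⟪Ls T, xhat⟫ = ∑ i ∈ range T, ⟪ℓ (i+1), xhat⟫ := by
      rw [hLs]
      rw [sum_inner]
      exact hIcc (fun τ => ⟪ℓ τ, xhat⟫) T
    have hasplit : ∑ i ∈ range T, (⟪m (i+1), x (i+1)⟫ + ⟪ℓ (i+1), xo (i+1)⟫ - ⟪m (i+1), xo (i+1)⟫)
        = (∑ i ∈ range T, ⟪m (i+1), x (i+1) - xo (i+1)⟫)
          + (∑ i ∈ range T, ⟪ℓ (i+1), xo (i+1) - xhat⟫)
          + ∑ i ∈ range T, ⟪ℓ (i+1), xhat⟫ := by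
      rw [← Finset.sum_add_distrib, ← Finset.sum_add_distrib]
      refine Finset.sum_congr rfl fun i _ => ?_
      simp only [inner_sub_right]
      ring
    rw [hasplit, ← hLhat] at htel
    -- conclude: combine htel, hup, hΔ', hbsum'
    have hquarter : (1 / (2 * η)) * ((1/2) * ∑ i ∈ range (T-1), (nrm (x (i+1+1) - x (i+1)))^2)
        = (1 / (4 * η)) * ∑ i ∈ range (T-1), (nrm (x (i+1+1) - x (i+1)))^2 := by
      have h4 : (1:ℝ)/(2*η) * (1/2) = 1/(4*η) := by
        field_simp
        ring
      rw [← mul_assoc, h4]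
    rw [hquarter] at hbsum'
    have hdiv : Δd / η = (1 / η) * Δd := by ring
    rw [hdiv]
    linarith [htel, hup, hΔ', hbsum']
  -- take supremum over x̂ via hRo
  have hub : Ro ≤ -(∑ t ∈ Icc 1 T, ⟪m t, x t - xo t⟫) + Δd / η
      - (1 / (4 * η)) * ∑ t ∈ Icc 1 (T - 1), (nrm (x (t + 1) - x t)) ^ 2 := by
    apply hRo.2
    rintro r ⟨xhat, hxhat, rfl⟩
    have := main xhat hxhat
    linarith
  linarith
end

section
/- Let X ⊆ R^n be compact convex, d : X → R differentiable and 1-strongly convex w.r.t. a norm ‖·‖, and η > 0. The OFTRL algorithm with losses ℓ^1,…,ℓ^T and predictions m^1,…,m^T produces x^t := argmin_{x∈X} ⟨m^t + Σ_{τ<t} ℓ^τ, x⟩ + (1/η)d(x). Setting x^0 := x^1, its regret satisfies the RVU bound: R^T := max_{x̂∈X} Σ_{t=1}^T ⟨ℓ^t, x^t − x̂⟩ ≤ Δ_d/η + η Σ_{t=1}^T ‖ℓ^t − m^t‖_*² − (1/(4η)) Σ_{t=1}^T ‖x^t − x^{t−1}‖², where Δ_d := max_{x,y∈X} (d(x)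 − d(y)). -/
open RealInnerProductSpace Finset

/-- Telescoping sum over `Icc 1 N`. -/
lemma stmt7_tel (Φ : ℕ → ℝ) (N : ℕ) :
    ∑ t ∈ Icc 1 N, (Φ t - Φ (t - 1)) = Φ N - Φ 0 := by
  induction N with
  | zero => simp
  | succ k ih =>
    rw [Finset.sum_Icc_succ_top (by omega : 1 ≤ k + 1), ih]
    simp only [Nat.add_sub_cancel]
    ring

/-- Shift reindexing of a sum over `Icc 2 N`. -/
lemma stmt7_shift (f : ℕ → ℝ) (N : ℕ) :
    ∑ t ∈ Icc 2 N, f (t - 1) = ∑ s ∈ Icc 1 (N - 1), f s := by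
  induction N with
  | zero => simp
  | succ k ih =>
    rcases Nat.eq_zero_or_pos k with rfl | hk
    · simp
    · have e1 : k + 1 - 1 = k := by omega
      have e2 : k = (k - 1) + 1 := by omega
      rw [Finset.sum_Icc_succ_top (by omega : 2 ≤ k + 1), ih, e1]
      conv_rhs => rw [e2, Finset.sum_Icc_succ_top (by omega : 1 ≤ (k - 1) + 1)]
      rw [← e2]

set_option maxHeartbeats 1000000 in
/-- the RVU property of OFTRL:
`R^T ≤ Δ_d/η + η Σ_t ‖ℓ^t − m^t‖_*² − (1/(4η)) Σ_t ‖x^t − x^{t−1}‖²` (with `x⁰ := x¹`). -/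
theorem stmt7 {n : ℕ} (X : Set (EuclideanSpace ℝ (Fin n)))
    (hXc : IsCompact X) (hXconv : Convex ℝ X)
    (nrm : EuclideanSpace ℝ (Fin n) → ℝ)
    (hn0 : ∀ v, 0 ≤ nrm v)
    (hndef : ∀ v, nrm v = 0 → v = 0)
    (hnsmul : ∀ (c : ℝ) v, nrm (c • v) = |c| * nrm v)
    (hntri : ∀ v w, nrm (v + w) ≤ nrm v + nrm w)
    (dnrm : EuclideanSpace ℝ (Fin n) → ℝ)
    (hdual : ∀ u, IsLUB {r : ℝ | ∃ w, nrm w ≤ 1 ∧ r = ⟪u, w⟫} (dnrm u))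
    (d : EuclideanSpace ℝ (Fin n) → ℝ)
    (gd : EuclideanSpace ℝ (Fin n) → EuclideanSpace ℝ (Fin n))
    (hdiff : ∀ x ∈ X, HasGradientAt d (gd x) x)
    (hsc : ∀ x ∈ X, ∀ y ∈ X,
      d y ≥ d x + ⟪gd x, y - x⟫ + (1 / 2) * (nrm (y - x)) ^ 2)
    (η : ℝ) (hη : 0 < η)
    (T : ℕ) (hT : 0 < T)
    (ℓ m : ℕ → EuclideanSpace ℝ (Fin n))
    (x : ℕ → EuclideanSpace ℝ (Fin n))
    -- OFTRL: `x t = argmin_{z ∈ X} ⟨m^t + Σ_{τ < t} ℓ^τ, z⟩ + (1/η) d(z)` for `t ≥ 1`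
    (hx : ∀ t, 1 ≤ t → x t ∈ X ∧ ∀ z ∈ X,
      ⟪m t + ∑ τ ∈ Icc 1 (t - 1), ℓ τ, x t⟫ + (1 / η) * d (x t)
        ≤ ⟪m t + ∑ τ ∈ Icc 1 (t - 1), ℓ τ, z⟫ + (1 / η) * d z)
    (hx0 : x 0 = x 1)
    -- `Δd = max_{x, y ∈ X} (d(x) − d(y))`
    (Δd : ℝ)
    (hΔd : IsLUB {r : ℝ | ∃ a ∈ X, ∃ b ∈ X, r = d a - d b} Δd)
    -- `RT = R^T = max_{x̂ ∈ X} Σ_t ⟨ℓ^t, x^t − x̂⟩`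
    (RT : ℝ)
    (hRT : IsLUB {r : ℝ | ∃ xhat ∈ X, r = ∑ t ∈ Icc 1 T, ⟪ℓ t, x t - xhat⟫} RT) :
    RT ≤ Δd / η + η * ∑ t ∈ Icc 1 T, (dnrm (ℓ t - m t)) ^ 2
      - (1 / (4 * η)) * ∑ t ∈ Icc 1 T, (nrm (x t - x (t - 1))) ^ 2 := by
  have hne : η ≠ 0 := ne_of_gt hη
  -- basic norm facts
  have hnz : nrm 0 = 0 := by simpa using hnsmul 0 0
  have hnneg : ∀ v, nrm (-v) = nrm v := fun v => by simpa using hnsmul (-1) v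
  have hnsub : ∀ v w, nrm (v - w) = nrm (w - v) := fun v w => by
    rw [← neg_sub w v, hnneg]
  have hd0 : ∀ u, 0 ≤ dnrm u := by
    intro u
    exact (hdual u).1 ⟨0, by simp [hnz], by simp⟩
  have hdual_le : ∀ u v, ⟪u, v⟫ ≤ dnrm u * nrm v := by
    intro u v
    rcases eq_or_lt_of_le (hn0 v) with h | h
    · have hv0 : v = 0 := hndef v h.symm
      rw [hv0, inner_zero_right, hnz, mul_zero]
    · have hw : nrm ((nrm v)⁻¹ • v) ≤ 1 := by
        rw [hnsmul, abs_of_pos (by positivity), inv_mul_cancel₀ (ne_of_gt h)]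
      have hle : ⟪u, (nrm v)⁻¹ • v⟫ ≤ dnrm u := (hdual u).1 ⟨_, hw, rfl⟩
      rw [real_inner_smul_right] at hle
      calc ⟪u, v⟫ = nrm v * ((nrm v)⁻¹ * ⟪u, v⟫) := by field_simp
        _ ≤ nrm v * dnrm u := by nlinarith
        _ = dnrm u * nrm v := mul_comm _ _
  have hXne : X.Nonempty := ⟨x 1, (hx 1 le_rfl).1⟩
  -- the strong minimality property of minimizers of `z ↦ ⟪c,z⟫ + (1/η) d z`
  have keymin : ∀ c : EuclideanSpace ℝ (Fin n), ∀ w ∈ X,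
      (∀ z ∈ X, ⟪c, w⟫ + (1/η) * d w ≤ ⟪c, z⟫ + (1/η) * d z) →
      ∀ y ∈ X, ⟪c, w⟫ + (1/η) * d w + (1/(2*η)) * (nrm (y - w))^2
        ≤ ⟪c, y⟫ + (1/η) * d y := by
    intro c w hw hmin y hy
    have hVI : 0 ≤ ⟪c, y - w⟫ + (1/η) * ⟪gd w, y - w⟫ := by
      have h1 : HasFDerivAt (fun z : EuclideanSpace ℝ (Fin n) => (⟪c, z⟫ : ℝ))
          (innerSL ℝ c) w := (innerSL ℝ c).hasFDerivAt
      have h2 : HasFDerivAt d ((InnerProductSpace.toDual ℝ _) (gd w)) w :=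
        (hdiff w hw).hasFDerivAt
      have h3 := h1.add (h2.const_mul (1/η))
      have hmin' : IsLocalMinOn (fun z => ⟪c, z⟫ + (1/η) * d z) X w :=
        IsMinOn.localize fun z hz => hmin z hz
      have hcone : y - w ∈ posTangentConeAt X w :=
        sub_mem_posTangentConeAt_of_segment_subset (hXconv.segment_subset hw hy)
      have := hmin'.hasFDerivWithinAt_nonneg h3.hasFDerivWithinAt hcone
      simpa using this
    have hscw := hsc w hw y hy
    have hcy : ⟪c, y⟫ = ⟪c, w⟫ + ⟪c, y - w⟫ := by
      rw [inner_sub_right]; ring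
    have h5 : (1/η) * d y ≥ (1/η) * (d w + ⟪gd w, y - w⟫ + (1/2) * (nrm (y - w))^2) :=
      mul_le_mul_of_nonneg_left hscw (by positivity)
    have hexp : (1/η) * (d w + ⟪gd w, y - w⟫ + (1/2) * (nrm (y - w))^2)
        = (1/η) * d w + (1/η) * ⟪gd w, y - w⟫ + (1/(2*η)) * (nrm (y - w))^2 := by
      field_simp
    rw [hexp] at h5
    rw [hcy]
    linarith
  -- Lipschitzness of the argmin map
  have lip : ∀ (a b wa wb : EuclideanSpace ℝ (Fin n)), wa ∈ X → wb ∈ X →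
      (∀ z ∈ X, ⟪a, wa⟫ + (1/η) * d wa ≤ ⟪a, z⟫ + (1/η) * d z) →
      (∀ z ∈ X, ⟪b, wb⟫ + (1/η) * d wb ≤ ⟪b, z⟫ + (1/η) * d z) →
      nrm (wa - wb) ≤ η * dnrm (a - b) := by
    intro a b wa wb hwa hwb hma hmb
    have h1 := keymin a wa hwa hma wb hwb
    have h2 := keymin b wb hwb hmb wa hwa
    rw [hnsub wb wa] at h1
    have hip : ⟪a - b, wb - wa⟫ ≤ dnrm (a - b) * nrm (wb - wa) := hdual_le _ _
    rw [hnsub wb wa, inner_sub_left, inner_sub_right, inner_sub_right] at hip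
    rcases eq_or_lt_of_le (hn0 (wa - wb)) with h0 | hpos
    · rw [← h0]; exact mul_nonneg (le_of_lt hη) (hd0 _)
    have hsum' : (1/(2*η)) * (nrm (wa - wb))^2 + (1/(2*η)) * (nrm (wa - wb))^2
        ≤ dnrm (a - b) * nrm (wa - wb) := by linarith
    have heq : (1/(2*η)) * (nrm (wa - wb))^2 + (1/(2*η)) * (nrm (wa - wb))^2
        = (1/η) * (nrm (wa - wb))^2 := by field_simp; ring
    have h6 : (1/η) * (nrm (wa - wb))^2 ≤ dnrm (a - b) * nrm (wa - wb) := by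
      linarith
    have h9 : nrm (wa - wb) * nrm (wa - wb) ≤ (η * dnrm (a - b)) * nrm (wa - wb) := by
      have h7 := mul_le_mul_of_nonneg_left h6 (le_of_lt hη)
      calc nrm (wa - wb) * nrm (wa - wb)
          = η * ((1/η) * (nrm (wa - wb))^2) := by field_simp
        _ ≤ η * (dnrm (a - b) * nrm (wa - wb)) := h7
        _ = (η * dnrm (a - b)) * nrm (wa - wb) := by ring
    exact le_of_mul_le_mul_right h9 hpos
  -- cumulative losses and omniscient minimizers
  set L : ℕ → EuclideanSpace ℝ (Fin n) := fun t => ∑ τ ∈ Icc 1 t, ℓ τ with hL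
  have hdcont : ContinuousOn d X := fun z hz =>
    ((hdiff z hz).continuousAt).continuousWithinAt
  have hgex : ∀ t : ℕ, ∃ z, z ∈ X ∧ ∀ y ∈ X,
      ⟪L t, z⟫ + (1/η) * d z ≤ ⟪L t, y⟫ + (1/η) * d y := by
    intro t
    have hcont : ContinuousOn (fun z => ⟪L t, z⟫ + (1/η) * d z) X := by
      apply ContinuousOn.add
      · exact (Continuous.inner continuous_const continuous_id).continuousOn
      · exact hdcont.const_smul (1/η)
    obtain ⟨z, hzX, hz⟩ := hXc.exists_isMinOn hXne hcont
    exact ⟨z, hzX, fun y hy => hz hy⟩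
  choose g hgX hgmin using hgex
  -- the minimality property of `x t`, in terms of `L`
  have hxmin : ∀ s : ℕ, ∀ z ∈ X,
      ⟪m (s+1) + L s, x (s+1)⟫ + (1/η) * d (x (s+1))
        ≤ ⟪m (s+1) + L s, z⟫ + (1/η) * d z := by
    intro s z hz
    have := (hx (s+1) (by omega)).2 z hz
    simpa [Nat.add_sub_cancel, hL] using this
  have hxX : ∀ t, 1 ≤ t → x t ∈ X := fun t ht => (hx t ht).1
  -- per-step inequality
  have step : ∀ t : ℕ, 1 ≤ t →
      ⟪ℓ t, x t⟫ ≤ ((⟪L t, g t⟫ + (1/η) * d (g t))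
          - (⟪L (t-1), g (t-1)⟫ + (1/η) * d (g (t-1))))
        + η * (dnrm (ℓ t - m t))^2
        - (1/(2*η)) * (nrm (g t - x t))^2 - (1/(2*η)) * (nrm (g (t-1) - x t))^2 := by
    intro t ht
    obtain ⟨s, rfl⟩ : ∃ s, t = s + 1 := ⟨t - 1, by omega⟩
    have hts : s + 1 - 1 = s := by omega
    rw [hts]
    have hLt : L (s+1) = L s + ℓ (s+1) := by
      simp only [hL]
      rw [Finset.sum_Icc_succ_top (by omega : 1 ≤ s + 1)]
    have hxsX := hxX (s+1) (by omega)
    have kI := keymin (L s) (g s) (hgX s) (hgmin s) (x (s+1)) hxsX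
    have kII := keymin (m (s+1) + L s) (x (s+1)) hxsX (hxmin s) (g (s+1)) (hgX (s+1))
    have hlip : nrm (g (s+1) - x (s+1)) ≤ η * dnrm (ℓ (s+1) - m (s+1)) := by
      have h := lip (L (s+1)) (m (s+1) + L s) (g (s+1)) (x (s+1)) (hgX (s+1)) hxsX
        (hgmin (s+1)) (hxmin s)
      have heq : L (s+1) - (m (s+1) + L s) = ℓ (s+1) - m (s+1) := by
        rw [hLt]; abel
      rwa [heq] at h
    have hip : ⟪ℓ (s+1) - m (s+1), x (s+1) - g (s+1)⟫
        ≤ dnrm (ℓ (s+1) - m (s+1)) * nrm (x (s+1) - g (s+1)) := hdual_le _ _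
    rw [hnsub (x (s+1)) (g (s+1))] at hip
    have h2 : ⟪ℓ (s+1) - m (s+1), x (s+1) - g (s+1)⟫
        ≤ η * (dnrm (ℓ (s+1) - m (s+1)))^2 := by
      calc ⟪ℓ (s+1) - m (s+1), x (s+1) - g (s+1)⟫
          ≤ dnrm (ℓ (s+1) - m (s+1)) * nrm (g (s+1) - x (s+1)) := hip
        _ ≤ dnrm (ℓ (s+1) - m (s+1)) * (η * dnrm (ℓ (s+1) - m (s+1))) :=
            mul_le_mul_of_nonneg_left hlip (hd0 _)
        _ = η * (dnrm (ℓ (s+1) - m (s+1)))^2 := by ring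
    rw [hnsub (x (s+1)) (g s)] at kI
    simp only [hLt, inner_add_left, inner_sub_left, inner_sub_right] at kI kII h2 ⊢
    nlinarith [kI, kII, h2]
  -- summing up: for every comparator x̂ ∈ X
  have hbound : ∀ xhat ∈ X, ∑ t ∈ Icc 1 T, ⟪ℓ t, x t - xhat⟫
      ≤ Δd / η + η * ∑ t ∈ Icc 1 T, (dnrm (ℓ t - m t)) ^ 2
        - (1 / (4 * η)) * ∑ t ∈ Icc 1 T, (nrm (x t - x (t - 1))) ^ 2 := by
    intro xhat hxhat
    set Φ : ℕ → ℝ := fun t => ⟪L t, g t⟫ + (1/η) * d (g t) with hΦ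
    have hsum1 : ∑ t ∈ Icc 1 T, ⟪ℓ t, x t⟫
        ≤ (Φ T - Φ 0) + η * ∑ t ∈ Icc 1 T, (dnrm (ℓ t - m t))^2
          - (1/(2*η)) * ∑ t ∈ Icc 1 T, (nrm (g t - x t))^2
          - (1/(2*η)) * ∑ t ∈ Icc 1 T, (nrm (g (t-1) - x t))^2 := by
      calc ∑ t ∈ Icc 1 T, ⟪ℓ t, x t⟫
          ≤ ∑ t ∈ Icc 1 T, ((Φ t - Φ (t-1))
              + (η * (dnrm (ℓ t - m t))^2
                - (1/(2*η)) * (nrm (g t - x t))^2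
                - (1/(2*η)) * (nrm (g (t-1) - x t))^2)) := by
            refine Finset.sum_le_sum fun t ht => ?_
            have hst := step t (mem_Icc.mp ht).1
            simp only [hΦ]
            linarith
        _ = _ := by
            rw [Finset.sum_add_distrib, stmt7_tel Φ T]
            simp only [Finset.sum_sub_distrib, ← Finset.mul_sum]
            ring
    -- comparator bound on the telescoped term
    have hcomp : Φ T - Φ 0 - ∑ t ∈ Icc 1 T, ⟪ℓ t, xhat⟫ ≤ Δd / η := by
      have hΦT : Φ T ≤ ⟪L T, xhat⟫ + (1/η) * d xhat := hgmin T xhat hxhat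
      have hL0 : L 0 = 0 := by simp [hL]
      have hΦ0 : Φ 0 = (1/η) * d (g 0) := by
        simp only [hΦ, hL0, inner_zero_left, zero_add]
      have hLT : ⟪L T, xhat⟫ = ∑ t ∈ Icc 1 T, ⟪ℓ t, xhat⟫ := by
        simp only [hL]; rw [sum_inner]
      have hdd : d xhat - d (g 0) ≤ Δd := hΔd.1 ⟨xhat, hxhat, g 0, hgX 0, rfl⟩
      have hmono : (1/η) * (d xhat - d (g 0)) ≤ (1/η) * Δd :=
        mul_le_mul_of_nonneg_left hdd (by positivity)
      have hexp : (1/η) * (d xhat - d (g 0)) = (1/η) * d xhat - (1/η) * d (g 0) := by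
        ring
      have hfin : (1/η) * Δd = Δd / η := by ring
      rw [hΦ0, ← hLT]
      linarith
    -- quadratic terms comparison
    have hquad : (1/(4*η)) * ∑ t ∈ Icc 1 T, (nrm (x t - x (t-1)))^2
        ≤ (1/(2*η)) * ∑ t ∈ Icc 1 T, (nrm (g t - x t))^2
          + (1/(2*η)) * ∑ t ∈ Icc 1 T, (nrm (g (t-1) - x t))^2 := by
      have hsplit : Icc 1 T = insert 1 (Icc 2 T) := by
        ext a; simp only [mem_Icc, mem_insert]; omega
      have h1ni : (1:ℕ) ∉ Icc 2 T := by simp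
      have hS : ∑ t ∈ Icc 1 T, (nrm (x t - x (t-1)))^2
          = ∑ t ∈ Icc 2 T, (nrm (x t - x (t-1)))^2 := by
        rw [hsplit, Finset.sum_insert h1ni]
        simp [hx0, hnz]
      have hterm : ∀ t ∈ Icc 2 T, (nrm (x t - x (t-1)))^2
          ≤ 2 * (nrm (g (t-1) - x t))^2 + 2 * (nrm (g (t-1) - x (t-1)))^2 := by
        intro t ht
        have htri := hntri (x t - g (t-1)) (g (t-1) - x (t-1))
        rw [sub_add_sub_cancel] at htri
        rw [hnsub (x t) (g (t-1))] at htri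
        nlinarith [hn0 (x t - x (t-1)), hn0 (g (t-1) - x t), hn0 (g (t-1) - x (t-1)),
          sq_nonneg (nrm (g (t-1) - x t) - nrm (g (t-1) - x (t-1)))]
      have hA : ∑ t ∈ Icc 2 T, (nrm (g (t-1) - x t))^2
          ≤ ∑ t ∈ Icc 1 T, (nrm (g (t-1) - x t))^2 := by
        apply Finset.sum_le_sum_of_subset_of_nonneg
        · intro a ha; simp only [mem_Icc] at *; omega
        · intro i _ _; positivity
      have hB : ∑ t ∈ Icc 2 T, (nrm (g (t-1) - x (t-1)))^2
          ≤ ∑ t ∈ Icc 1 T, (nrm (g t - x t))^2 := by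
        rw [stmt7_shift (fun s => (nrm (g s - x s))^2) T]
        apply Finset.sum_le_sum_of_subset_of_nonneg
        · intro a ha; simp only [mem_Icc] at *; omega
        · intro i _ _; positivity
      have hmid : ∑ t ∈ Icc 2 T, (nrm (x t - x (t-1)))^2
          ≤ 2 * ∑ t ∈ Icc 2 T, (nrm (g (t-1) - x t))^2
            + 2 * ∑ t ∈ Icc 2 T, (nrm (g (t-1) - x (t-1)))^2 := by
        rw [Finset.mul_sum, Finset.mul_sum, ← Finset.sum_add_distrib]
        exact Finset.sum_le_sum hterm
      have hc4 : (0:ℝ) ≤ 1/(4*η) := by positivity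
      have key : ∑ t ∈ Icc 1 T, (nrm (x t - x (t-1)))^2
          ≤ 2 * ∑ t ∈ Icc 1 T, (nrm (g (t-1) - x t))^2
            + 2 * ∑ t ∈ Icc 1 T, (nrm (g t - x t))^2 := by
        rw [hS]; linarith
      have hmul := mul_le_mul_of_nonneg_left key hc4
      calc (1/(4*η)) * ∑ t ∈ Icc 1 T, (nrm (x t - x (t-1)))^2 ≤ _ := hmul
        _ = (1/(2*η)) * ∑ t ∈ Icc 1 T, (nrm (g (t-1) - x t))^2
            + (1/(2*η)) * ∑ t ∈ Icc 1 T, (nrm (g t - x t))^2 := by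
          field_simp; ring
        _ = _ := by ring
    -- conclude
    have hsplit2 : ∑ t ∈ Icc 1 T, ⟪ℓ t, x t - xhat⟫
        = ∑ t ∈ Icc 1 T, ⟪ℓ t, x t⟫ - ∑ t ∈ Icc 1 T, ⟪ℓ t, xhat⟫ := by
      rw [← Finset.sum_sub_distrib]
      exact Finset.sum_congr rfl fun t _ => inner_sub_right _ _ _
    rw [hsplit2]
    linarith
  -- pass to the supremum
  refine hRT.2 ?_
  rintro r ⟨xhat, hxhat, rfl⟩
  exact hbound xhat hxhat
end

section
/- Let X ⊆ R^n be compact convex, d differentiable and 1-strongly convex w.r.t. ‖·‖, η > 0, and suppose the prediction is omniscient, m^t = ℓ^t for all t. Then the OFTRL iterates x^t := argmin_{x∈X} ⟨m^t + Σ_{τ<t} ℓ^τ, x⟩ + (1/η)d(x) have cumulative regret R^T := max_{x̂∈X} Σ_{t=1}^T ⟨ℓ^t, x^t − x̂⟩ bounded by a constant independent of T: R^T ≤ Δ_d/η, where Δ_d := max_{x,y∈X}(d(x) − d(y)). -/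
open RealInnerProductSpace Finset

/-- with omniscient predictions `m^t = ℓ^t`, the OFTRL iterates
have cumulative regret at most `Δ_d/η`, independent of the horizon `T`. -/
theorem stmt16 {n : ℕ} (X : Set (EuclideanSpace ℝ (Fin n)))
    (hXc : IsCompact X) (hXconv : Convex ℝ X)
    (nrm : EuclideanSpace ℝ (Fin n) → ℝ)
    (hn0 : ∀ v, 0 ≤ nrm v)
    (hndef : ∀ v, nrm v = 0 → v = 0)
    (hnsmul : ∀ (c : ℝ) v, nrm (c • v) = |c| * nrm v)
    (hntri : ∀ v w, nrm (v + w) ≤ nrm v + nrm w)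
    (d : EuclideanSpace ℝ (Fin n) → ℝ)
    (gd : EuclideanSpace ℝ (Fin n) → EuclideanSpace ℝ (Fin n))
    (hdiff : ∀ x ∈ X, HasGradientAt d (gd x) x)
    (hsc : ∀ x ∈ X, ∀ y ∈ X,
      d y ≥ d x + ⟪gd x, y - x⟫ + (1 / 2) * (nrm (y - x)) ^ 2)
    (η : ℝ) (hη : 0 < η)
    (T : ℕ)
    (ℓ m : ℕ → EuclideanSpace ℝ (Fin n))
    -- the predictions are omniscient:
    (hm : ∀ t, m t = ℓ t)
    (x : ℕ → EuclideanSpace ℝ (Fin n))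
    -- OFTRL: `x t = argmin_{z ∈ X} ⟨m^t + Σ_{τ < t} ℓ^τ, z⟩ + (1/η) d(z)`
    (hx : ∀ t, x t ∈ X ∧ ∀ z ∈ X,
      ⟪m t + ∑ τ ∈ Icc 1 (t - 1), ℓ τ, x t⟫ + (1 / η) * d (x t)
        ≤ ⟪m t + ∑ τ ∈ Icc 1 (t - 1), ℓ τ, z⟫ + (1 / η) * d z)
    -- `Δd = max_{x, y ∈ X} (d(x) − d(y))`
    (Δd : ℝ)
    (hΔd : IsLUB {r : ℝ | ∃ a ∈ X, ∃ b ∈ X, r = d a - d b} Δd) :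
    ∀ xhat ∈ X, ∑ t ∈ Icc 1 T, ⟪ℓ t, x t - xhat⟫ ≤ Δd / η := by

  intro xhat hxhat
  have hΔ0 : 0 ≤ Δd := hΔd.1 ⟨xhat, hxhat, xhat, hxhat, by ring⟩
  rcases Nat.eq_zero_or_pos T with hT | hT
  · subst hT; simp; positivity
  have opt : ∀ t, 1 ≤ t → ∀ z ∈ X,
      ⟪∑ τ ∈ Icc 1 t, ℓ τ, x t⟫ + (1 / η) * d (x t)
        ≤ ⟪∑ τ ∈ Icc 1 t, ℓ τ, z⟫ + (1 / η) * d z := by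
    intro t ht z hz
    obtain ⟨s, rfl⟩ : ∃ s, t = s + 1 := ⟨t - 1, by omega⟩
    have hsum : ∑ τ ∈ Icc 1 (s + 1), ℓ τ = m (s + 1) + ∑ τ ∈ Icc 1 (s + 1 - 1), ℓ τ := by
      rw [Finset.sum_Icc_succ_top (by omega), hm]
      simp [add_comm]
    rw [hsum]
    exact (hx (s + 1)).2 z hz
  have key : ∀ t, 1 ≤ t → ∑ s ∈ Icc 1 t, ⟪ℓ s, x s⟫ + (1 / η) * d (x 1)
      ≤ ⟪∑ τ ∈ Icc 1 t, ℓ τ, x t⟫ + (1 / η) * d (x t) := by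
    intro t ht
    induction t, ht using Nat.le_induction with
    | base => simp
    | succ t ht ih =>
      have h1 : ∑ s ∈ Icc 1 (t + 1), ⟪ℓ s, x s⟫
          = ∑ s ∈ Icc 1 t, ⟪ℓ s, x s⟫ + ⟪ℓ (t + 1), x (t + 1)⟫ :=
        Finset.sum_Icc_succ_top (by omega) _
      have h2 : ∑ τ ∈ Icc 1 (t + 1), ℓ τ = (∑ τ ∈ Icc 1 t, ℓ τ) + ℓ (t + 1) :=
        Finset.sum_Icc_succ_top (by omega) _
      have h3 := opt t ht (x (t + 1)) (hx (t + 1)).1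
      have h4 : ⟪∑ τ ∈ Icc 1 (t + 1), ℓ τ, x (t + 1)⟫
          = ⟪∑ τ ∈ Icc 1 t, ℓ τ, x (t + 1)⟫ + ⟪ℓ (t + 1), x (t + 1)⟫ := by
        rw [h2, inner_add_left]
      rw [h1, h4]
      linarith
  have hfin := key T hT
  have hopt := opt T hT xhat hxhat
  have hmem : d xhat - d (x 1) ≤ Δd := hΔd.1 ⟨xhat, hxhat, x 1, (hx 1).1, rfl⟩
  have hsplit : ∑ t ∈ Icc 1 T, ⟪ℓ t, x t - xhat⟫
      = ∑ t ∈ Icc 1 T, ⟪ℓ t, x t⟫ - ⟪∑ τ ∈ Icc 1 T, ℓ τ, xhat⟫ := by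
    rw [sum_inner]
    rw [← Finset.sum_sub_distrib]
    exact Finset.sum_congr rfl fun t _ => inner_sub_right _ _ _
  rw [hsplit]
  have hmul : (1 / η) * (d xhat - d (x 1)) ≤ Δd / η := by
    rw [div_eq_mul_inv Δd, mul_comm Δd, ← one_div]
    exact mul_le_mul_of_nonneg_left hmem (by positivity)
  linarith
end
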